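/- Define F⁻(v) := 1 - v·(4 + 2·log((1-v)/(4v)) + (log((1-v)/(4v)))²) - (1/2)·(1 - 3v) for 0 < v < 1. Then F⁻(v) = -(3125/192)·(v - 1/5)³ + O((v - 1/5)⁴) as v → 1/5. -/
import Mathlib


open Real

lemma logrem (x : ℝ) (hx : |x| ≤ 1/2) :
    |Real.log (1+x) - (x - x^2/2 + x^3/3)| ≤ 2 * x^4 := by
  have h1 : |(-x)| < 1 := by rw [abs_neg]; linarith [abs_nonneg x]
  have := Real.abs_log_sub_add_sum_range_le h1 3
  simp only [Finset.sum_range_succ, Finset.sum_range_zero] at this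
  rw [abs_neg] at this
  have e : (1 : ℝ) - -x = 1 + x := by ring
  rw [e] at this
  push_cast at this
  have e2 : ((0:ℝ) + (-x)^(0+1)/(0+1) + (-x)^(1+1)/(1+1) + (-x)^(2+1)/(2+1)) + Real.log (1+x)
      = Real.log (1+x) - (x - x^2/2 + x^3/3) := by push_cast; ring
  rw [e2] at this
  have h2 : |x|^4 / (1 - |x|) ≤ 2 * x^4 := by
    have h3 : (0:ℝ) < 1 - |x| := by linarith [abs_nonneg x]
    rw [div_le_iff₀ h3]
    have : |x|^4 = x^4 := by rw [← abs_pow, abs_of_nonneg (by positivity)]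
    nlinarith [abs_nonneg x, pow_nonneg (abs_nonneg x) 4]
  linarith


lemma keybound (x : ℝ) (hx : |x| ≤ 1/2) :
    |2*x - 2*Real.log (1+x) - (Real.log (1+x))^2 - x^3/3| ≤ 12 * x^4 := by
  obtain ⟨r, hrdef⟩ : ∃ r, Real.log (1+x) = (x - x^2/2 + x^3/3) + r :=
    ⟨Real.log (1+x) - (x - x^2/2 + x^3/3), by ring⟩
  have hrb : |r| ≤ 2 * x^4 := by
    have := logrem x hx
    rw [hrdef] at this
    simpa using this
  have hx40 : (0:ℝ) ≤ x^4 := by positivity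
  obtain ⟨hx1, hx2⟩ := abs_le.1 hx
  obtain ⟨hr1, hr2⟩ := abs_le.1 hrb
  have hsq : x^2 ≤ 1/4 := by nlinarith
  have hx4 : x^4 ≤ 1/16 := by nlinarith [sq_nonneg (x^2 - 1/4)]
  have hP : |x - x^2/2 + x^3/3| ≤ 1 := by
    rw [abs_le]; constructor <;> nlinarith [sq_nonneg (x+1/2), sq_nonneg (x-1/2), sq_nonneg x]
  have hPr : |2*(x - x^2/2 + x^3/3)*r| ≤ 4*x^4 := by
    have he : |2*(x - x^2/2 + x^3/3)*r| = 2 * |x - x^2/2 + x^3/3| * |r| := by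
      rw [abs_mul, abs_mul]; norm_num
    rw [he]
    calc 2 * |x - x^2/2 + x^3/3| * |r| ≤ 2 * 1 * (2*x^4) := by
          apply mul_le_mul _ hrb (abs_nonneg _) (by norm_num)
          linarith [hP]
      _ = 4*x^4 := by ring
  obtain ⟨hPr1, hPr2⟩ := abs_le.1 hPr
  have hrsq : r^2 ≤ x^4/4 := by
    have h1 : r^2 ≤ (2*x^4)^2 := sq_le_sq' (by linarith) hr2
    nlinarith [mul_le_mul_of_nonneg_left hx4 hx40]
  have hx5u : x^5 ≤ x^4/2 := by linarith [mul_le_mul_of_nonneg_left hx2 hx40]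
  have hx5l : -(x^4/2) ≤ x^5 := by linarith [mul_le_mul_of_nonneg_left hx1 hx40]
  have hx60 : (0:ℝ) ≤ x^6 := by positivity
  have hx6 : x^6 ≤ x^4/4 := by linarith [mul_le_mul_of_nonneg_left hsq hx40]
  have hid : 2*x - 2*((x - x^2/2 + x^3/3) + r) - ((x - x^2/2 + x^3/3) + r)^2 - x^3/3
      = -(11/12)*x^4 + x^5/3 - x^6/9 - 2*r - 2*(x - x^2/2 + x^3/3)*r - r^2 := by ring
  rw [hrdef, hid, abs_le]
  constructor
  · linarith [sq_nonneg r]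
  · linarith [sq_nonneg r]

noncomputable def Fminus (v : ℝ) : ℝ :=
  1 - v * (4 + 2 * Real.log ((1-v)/(4*v)) + (Real.log ((1-v)/(4*v)))^2)
    - (1/2) * (1 - 3*v)

theorem stmt_18 : ∃ C δ : ℝ, 0 < C ∧ 0 < δ ∧ ∀ v : ℝ, 0 < v → v < 1 →
    |v - 1/5| ≤ δ → |Fminus v + (3125/192) * (v - 1/5)^3| ≤ C * (v - 1/5)^4 := by
  refine ⟨10000, 1/20, by norm_num, by norm_num, fun v hv0 hv1 hvd => ?_⟩
  obtain ⟨hd1, hd2⟩ := abs_le.1 hvd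
  have hvlow : (3:ℝ)/20 ≤ v := by linarith
  have hvhigh : v ≤ 1/4 := by linarith
  have hvne : v ≠ 0 := ne_of_gt hv0
  set x : ℝ := (1-5*v)/(4*v) with hxdef
  have h4v : (0:ℝ) < 4*v := by linarith
  have hxb : |x| ≤ 1/2 := by
    rw [abs_le, hxdef]
    constructor
    · rw [le_div_iff₀ h4v]; linarith
    · rw [div_le_iff₀ h4v]; linarith
  have hlog : (1-v)/(4*v) = 1 + x := by rw [hxdef]; field_simp; ring
  have ht4 : (0:ℝ) ≤ (v-1/5)^4 := by positivity
  have hx40 : (0:ℝ) ≤ x^4 := by positivity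
  have hg := keybound x hxb
  have hmain : Fminus v + (3125/192) * (v - 1/5)^3
      = v * (2*x - 2*Real.log (1+x) - (Real.log (1+x))^2 - x^3/3)
        + (625*(5*v+1)/(192*v^2)) * (v-1/5)^4 := by
    unfold Fminus
    rw [hlog, hxdef]
    field_simp
    ring
  have hv3 : (27:ℝ)/8000 ≤ v^3 := by
    nlinarith [mul_nonneg (sub_nonneg.2 hvlow) (mul_pos hv0 hv0).le,
      mul_nonneg (sub_nonneg.2 hvlow) hv0.le]
  have h1 : v * (12 * x^4) ≤ 9000 * (v-1/5)^4 := by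
    have hx4eq : x^4 = (625*(v-1/5)^4)/(256*v^4) := by
      rw [hxdef, div_pow]
      congr 1 <;> ring
    rw [hx4eq, show v * (12 * ((625*(v-1/5)^4)/(256*v^4)))
        = (7500*v*(v-1/5)^4)/(256*v^4) from by ring]
    rw [div_le_iff₀ (by positivity)]
    nlinarith [mul_nonneg (mul_nonneg ht4 hv0.le)
      (by linarith : (0:ℝ) ≤ 2304000*v^3 - 7500)]
  have hB : 625*(5*v+1)/(192*v^2) ≤ 1000 := by
    rw [div_le_iff₀ (by positivity)]
    nlinarith [sq_nonneg (v-3/20)]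
  have hB0 : (0:ℝ) ≤ 625*(5*v+1)/(192*v^2) := by positivity
  rw [hmain]
  calc |v * (2*x - 2*Real.log (1+x) - (Real.log (1+x))^2 - x^3/3)
        + (625*(5*v+1)/(192*v^2)) * (v-1/5)^4|
      ≤ |v * (2*x - 2*Real.log (1+x) - (Real.log (1+x))^2 - x^3/3)|
        + |(625*(5*v+1)/(192*v^2)) * (v-1/5)^4| := abs_add_le _ _
    _ ≤ v * (12 * x^4) + (625*(5*v+1)/(192*v^2)) * (v-1/5)^4 := by
        gcongr ?_ + ?_
        · rw [abs_mul, abs_of_pos hv0]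
          exact mul_le_mul_of_nonneg_left hg hv0.le
        · rw [abs_of_nonneg (mul_nonneg hB0 ht4)]
    _ ≤ 9000 * (v-1/5)^4 + 1000 * (v-1/5)^4 :=
        add_le_add h1 (mul_le_mul_of_nonneg_right hB ht4)
    _ = 10000 * (v-1/5)^4 := by ring
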